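/- arXiv:1811.04841 — 6 statements merged into one kernel-verified Lean document; each statement's English description precedes it below -/
import Mathlib

section
/- Let X be a compact metric space and f : X → X a continuous map. If the map ω_f : x ↦ ω(x,f) is continuous (Hausdorff metric) and closure(Per(f)) = ⋂_{n∈ℕ} f^n(X), then ω(x,f) = Ω(x,f) for every x ∈ X. -/
open Filter Topology Set

/-- The omega-limit set ω(x,f): points y with f^[nᵢ] x → y for some strictly
increasing sequence (nᵢ). -/
def omegaLimitPts {X : Type*} [TopologicalSpace X] (f : X → X) (x : X) : Set X :=
  {y | ∃ n : ℕ → ℕ, StrictMono n ∧ Tendsto (fun i => f^[n i] x) atTop (𝓝 y)}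

/-- The prolongational limit set Ω(x,f): points y with f^[nᵢ] xᵢ → y for some
sequence xᵢ → x and strictly increasing (nᵢ). -/
def prolongPts {X : Type*} [TopologicalSpace X] (f : X → X) (x : X) : Set X :=
  {y | ∃ (xs : ℕ → X) (n : ℕ → ℕ), StrictMono n ∧ Tendsto xs atTop (𝓝 x) ∧
        Tendsto (fun i => f^[n i] (xs i)) atTop (𝓝 y)}

/-- f is equicontinuous: the family of iterates {fⁿ} is (uniformly) equicontinuous. -/
def EquicontinuousMap {X : Type*} [MetricSpace X] (f : X → X) : Prop :=
  ∀ ε > (0:ℝ), ∃ δ > (0:ℝ), ∀ x y : X, dist x y < δ → ∀ n : ℕ,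
    dist (f^[n] x) (f^[n] y) < ε

/-- Continuity of the map ω_f : x ↦ ω(x,f) with respect to the Hausdorff metric. -/
def OmegaMapContinuous {X : Type*} [MetricSpace X] (f : X → X) : Prop :=
  ∀ x₀ : X, ∀ ε > (0:ℝ), ∃ δ > (0:ℝ), ∀ x : X, dist x x₀ < δ →
    Metric.hausdorffDist (omegaLimitPts f x) (omegaLimitPts f x₀) < ε

/-- p is an end point: every open set containing p contains an open set V ∋ p
whose boundary is a single point. -/
def IsEndpoint {X : Type*} [TopologicalSpace X] (p : X) : Prop :=
  ∀ U : Set X, IsOpen U → p ∈ U →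
    ∃ V : Set X, IsOpen V ∧ p ∈ V ∧ V ⊆ U ∧ ∃ b : X, frontier V = {b}

/-- X contains no simple closed curve: no subspace homeomorphic to the circle. -/
def NoSimpleClosedCurve (X : Type*) [TopologicalSpace X] : Prop :=
  ∀ s : Set X, ¬ Nonempty (s ≃ₜ Circle)

/-!
A point `y ∈ Ω(x)` is a limit of `fⁿⁱ(xᵢ)` with `xᵢ → x`. Since `ω(fⁿⁱ(xᵢ)) = ω(xᵢ)`,
continuity of `ω_f` at `x` and at `y` forces `ω(y) = ω(x)`. Moreover `y` lies in every `fⁿ(X)`,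
hence is a limit of periodic points `p`; as `p ∈ ω(p)` and `ω(p)` is Hausdorff-close to `ω(y)`,
the point `y` lies in the closed set `ω(y) = ω(x)`.
-/

open Metric

section Topological

variable {X : Type*} [TopologicalSpace X] (f : X → X)

theorem omegaLimitPts_subset_prolongPts (x : X) : omegaLimitPts f x ⊆ prolongPts f x :=
  fun _ ⟨n, hn, hy⟩ => ⟨fun _ => x, n, hn, tendsto_const_nhds, hy⟩

theorem mem_omegaLimitPts_self_of_mem_periodicPts {p : X} (hp : p ∈ Function.periodicPts f) :
    p ∈ omegaLimitPts f p := by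
  obtain ⟨m, hm, hmp⟩ := hp
  exact ⟨fun i => m * (i + 1), fun a b hab => Nat.mul_lt_mul_of_pos_left (by omega) hm,
    tendsto_const_nhds.congr fun i => (hmp.mul_const (i + 1)).symm⟩

theorem prolongPts_subset_iInter_image_iterate [CompactSpace X] [T2Space X] {f : X → X}
    (hf : Continuous f) (x : X) : prolongPts f x ⊆ ⋂ k : ℕ, f^[k] '' univ := by
  rintro y ⟨xs, n, hn, -, hy⟩
  refine mem_iInter.mpr fun k => ?_
  refine (isCompact_univ.image (hf.iterate k)).isClosed.mem_of_tendsto hy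
    (eventually_atTop.mpr ⟨k, fun i hi => ⟨f^[n i - k] (xs i), mem_univ _, ?_⟩⟩)
  rw [← Function.iterate_add_apply, Nat.add_sub_cancel' (hi.trans hn.le_apply)]

variable [FirstCountableTopology X]

theorem omegaLimitPts_eq_setOf_mapClusterPt (x : X) :
    omegaLimitPts f x = {y | MapClusterPt y atTop (fun n => f^[n] x)} := by
  ext y
  constructor
  · rintro ⟨n, hn, hy⟩
    exact hy.mapClusterPt.of_comp hn.tendsto_atTop
  · intro hy
    exact hy.tendsto_subseq

theorem isClosed_omegaLimitPts (x : X) : IsClosed (omegaLimitPts f x) := by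
  rw [omegaLimitPts_eq_setOf_mapClusterPt]
  exact isClosed_setOfPred_clusterPt

theorem omegaLimitPts_nonempty [CompactSpace X] (x : X) : (omegaLimitPts f x).Nonempty := by
  rw [omegaLimitPts_eq_setOf_mapClusterPt]
  exact exists_clusterPt_of_compactSpace _

theorem omegaLimitPts_iterate (x : X) (k : ℕ) :
    omegaLimitPts f (f^[k] x) = omegaLimitPts f x := by
  have hshift : (fun n => f^[n] (f^[k] x)) = (fun n => f^[n] x) ∘ fun n => n + k :=
    funext fun n => (Function.iterate_add_apply f n k x).symm
  simp only [omegaLimitPts_eq_setOf_mapClusterPt, hshift, mapClusterPt_comp,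
    map_add_atTop_eq_nat]

end Topological

section Metric

variable {X : Type*} [MetricSpace X] {f : X → X}

theorem OmegaMapContinuous.tendsto_hausdorffDist (hω : OmegaMapContinuous f) {ι : Type*}
    {l : Filter ι} {zs : ι → X} {z : X} (hz : Tendsto zs l (𝓝 z)) :
    Tendsto (fun i => hausdorffDist (omegaLimitPts f (zs i)) (omegaLimitPts f z)) l (𝓝 0) := by
  refine Metric.tendsto_nhds.mpr fun ε hε => ?_
  obtain ⟨δ, hδ, H⟩ := hω z ε hε
  filter_upwards [Metric.tendsto_nhds.mp hz δ hδ] with i hi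
  rw [Real.dist_0_eq_abs, abs_of_nonneg hausdorffDist_nonneg]
  exact H _ hi

variable [CompactSpace X]

theorem hausdorffEDist_omegaLimitPts_ne_top (f : X → X) (x y : X) :
    hausdorffEDist (omegaLimitPts f x) (omegaLimitPts f y) ≠ ⊤ :=
  hausdorffEDist_ne_top_of_nonempty_of_bounded (omegaLimitPts_nonempty f x)
    (omegaLimitPts_nonempty f y) isBounded_of_compactSpace isBounded_of_compactSpace

namespace OmegaMapContinuous

theorem omegaLimitPts_eq_of_mem_prolongPts (hω : OmegaMapContinuous f) {x y : X}
    (hy : y ∈ prolongPts f x) : omegaLimitPts f y = omegaLimitPts f x := by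
  obtain ⟨xs, n, -, hxs, hfy⟩ := hy
  have hx_lim := hω.tendsto_hausdorffDist hxs
  have hy_lim : Tendsto (fun i => hausdorffDist (omegaLimitPts f (xs i)) (omegaLimitPts f y))
      atTop (𝓝 0) := by
    simpa only [omegaLimitPts_iterate] using hω.tendsto_hausdorffDist hfy
  have hbound : ∀ i, hausdorffDist (omegaLimitPts f y) (omegaLimitPts f x) ≤
      hausdorffDist (omegaLimitPts f (xs i)) (omegaLimitPts f y) +
        hausdorffDist (omegaLimitPts f (xs i)) (omegaLimitPts f x) := fun i => by
    rw [hausdorffDist_comm (s := omegaLimitPts f (xs i)) (t := omegaLimitPts f y)]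
    exact hausdorffDist_triangle (hausdorffEDist_omegaLimitPts_ne_top f _ _)
  have hzero : hausdorffDist (omegaLimitPts f y) (omegaLimitPts f x) = 0 :=
    le_antisymm (le_of_tendsto_of_tendsto' tendsto_const_nhds
      (by simpa using hy_lim.add hx_lim) hbound) hausdorffDist_nonneg
  exact ((isClosed_omegaLimitPts f y).hausdorffDist_zero_iff_eq (isClosed_omegaLimitPts f x)
    (hausdorffEDist_omegaLimitPts_ne_top f _ _)).mp hzero

theorem mem_omegaLimitPts_self_of_mem_closure (hω : OmegaMapContinuous f) {y : X}
    (hy : y ∈ closure {p | p ∈ omegaLimitPts f p}) : y ∈ omegaLimitPts f y := by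
  obtain ⟨p, hp_rec, hp⟩ := mem_closure_iff_seq_limit.mp hy
  have hlim : Tendsto (fun k => dist y (p k) +
      hausdorffDist (omegaLimitPts f (p k)) (omegaLimitPts f y)) atTop (𝓝 0) := by
    simpa using ((tendsto_const_nhds (x := y)).dist hp).add (hω.tendsto_hausdorffDist hp)
  have hbound : ∀ k, infDist y (omegaLimitPts f y) ≤
      dist y (p k) + hausdorffDist (omegaLimitPts f (p k)) (omegaLimitPts f y) := fun k =>
    calc infDist y (omegaLimitPts f y)
        ≤ infDist (p k) (omegaLimitPts f y) + dist y (p k) := infDist_le_infDist_add_dist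
      _ ≤ infDist (p k) (omegaLimitPts f (p k)) +
            hausdorffDist (omegaLimitPts f (p k)) (omegaLimitPts f y) + dist y (p k) := by
          gcongr
          exact infDist_le_infDist_add_hausdorffDist (hausdorffEDist_omegaLimitPts_ne_top f _ _)
      _ = _ := by rw [infDist_zero_of_mem (s := omegaLimitPts f (p k)) (hp_rec k)]; ring
  rw [(isClosed_omegaLimitPts f y).mem_iff_infDist_zero (omegaLimitPts_nonempty f y)]
  exact le_antisymm (le_of_tendsto_of_tendsto' tendsto_const_nhds hlim hbound) infDist_nonneg

end OmegaMapContinuous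

end Metric

/-- If ω_f is continuous and closure(Per(f)) = ⋂ₙ fⁿ(X), then ω(x,f) = Ω(x,f)
for every x. -/
theorem omega_eq_prolong_of_omegaMapContinuous {X : Type*} [MetricSpace X]
    [CompactSpace X] (f : X → X) (hf : Continuous f)
    (hω : OmegaMapContinuous f)
    (hP : closure (Function.periodicPts f) = ⋂ n : ℕ, f^[n] '' Set.univ) :
    ∀ x : X, omegaLimitPts f x = prolongPts f x := by
  intro x
  refine (omegaLimitPts_subset_prolongPts f x).antisymm fun y hy => ?_
  have hy_rec : y ∈ closure {p | p ∈ omegaLimitPts f p} :=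
    closure_mono (fun _ => mem_omegaLimitPts_self_of_mem_periodicPts f)
      (hP ▸ prolongPts_subset_iInter_image_iterate hf x hy)
  rw [← hω.omegaLimitPts_eq_of_mem_prolongPts hy]
  exact hω.mem_omegaLimitPts_self_of_mem_closure hy_rec
end

section
/- Let X be a compact metric space and f : X → X a continuous equicontinuous map. Then the map ω_f : X → 2^X, x ↦ ω(x,f), is continuous with respect to the Hausdorff metric. -/
/-! If the orbits of `a` and `b` stay `r`-close, then along any subsequence of times on which
the orbit of `a` converges to `z`, compactness extracts a further subsequence on which the
orbit of `b` converges to some `w`, and `dist z w ≤ r` in the limit. Hence `ω(a)` and `ω(b)`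
are within Hausdorff distance `r`; equicontinuity makes `r` small when `a` is close to `b`. -/

open Filter Topology Set

section OmegaLimit

variable {X : Type*} [PseudoMetricSpace X] [CompactSpace X] {f : X → X} {a b : X} {r : ℝ}

theorem exists_mem_omegaLimitPts_dist_le (hr : ∀ n, dist (f^[n] a) (f^[n] b) ≤ r)
    {z : X} (hz : z ∈ omegaLimitPts f a) : ∃ w ∈ omegaLimitPts f b, dist z w ≤ r := by
  obtain ⟨n, hn, hzn⟩ := hz
  obtain ⟨w, φ, hφ, hw⟩ := CompactSpace.tendsto_subseq fun i => f^[n i] b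
  refine ⟨w, ⟨n ∘ φ, hn.comp hφ, hw⟩, ?_⟩
  exact le_of_tendsto ((hzn.comp hφ.tendsto_atTop).dist hw)
    (Eventually.of_forall fun i => hr (n (φ i)))

theorem hausdorffDist_omegaLimitPts_le (hr : ∀ n, dist (f^[n] a) (f^[n] b) ≤ r) :
    Metric.hausdorffDist (omegaLimitPts f a) (omegaLimitPts f b) ≤ r :=
  Metric.hausdorffDist_le_of_mem_dist (dist_nonneg.trans (hr 0))
    (fun _ hz => exists_mem_omegaLimitPts_dist_le hr hz)
    (fun _ hw => by
      obtain ⟨z, hz, hzw⟩ := exists_mem_omegaLimitPts_dist_le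
        (fun n => (dist_comm _ _).trans_le (hr n)) hw
      exact ⟨z, hz, dist_comm z _ ▸ hzw⟩)

end OmegaLimit

theorem omegaMapContinuous_of_equicontinuous_general {X : Type*} [MetricSpace X]
    [CompactSpace X] (f : X → X)
    (heq : EquicontinuousMap f) :
    OmegaMapContinuous f := by
  intro x₀ ε hε
  obtain ⟨δ, hδ, horbit⟩ := heq (ε / 2) (half_pos hε)
  refine ⟨δ, hδ, fun x hx => ?_⟩
  calc Metric.hausdorffDist (omegaLimitPts f x) (omegaLimitPts f x₀)
      ≤ ε / 2 := hausdorffDist_omegaLimitPts_le fun n => (horbit x x₀ hx n).le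
    _ < ε := half_lt_self hε

/-- If f is equicontinuous, then ω_f is continuous (Hausdorff metric). -/
theorem omegaMapContinuous_of_equicontinuous {X : Type*} [MetricSpace X]
    [CompactSpace X] (f : X → X) (hf : Continuous f)
    (heq : EquicontinuousMap f) :
    OmegaMapContinuous f :=
  omegaMapContinuous_of_equicontinuous_general f heq
end

section
/- Let X be a compact metric space and f : X → X a continuous map. If ω(x,f) = Ω(x,f) for every x ∈ X, then the map ω_f : x ↦ ω(x,f) is upper semicontinuous. -/
open Filter Topology Set

/-!
If ω_f failed to be upper semicontinuous at x₀, there would be points xₖ → x₀ and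
yₖ ∈ ω(xₖ, f) outside an open V ⊇ ω(x₀, f); by compactness yₖ → y ∉ V along a
subsequence. Choosing for each k an iterate f^[nₖ] xₖ within 1/(k+1) of yₖ, with nₖ
strictly increasing, shows y ∈ Ω(x₀, f) = ω(x₀, f) ⊆ V, a contradiction.
-/

theorem frequently_iterate_mem_of_mem_omegaLimitPts {X : Type*} [TopologicalSpace X]
    {f : X → X} {x y : X} (hy : y ∈ omegaLimitPts f x) {s : Set X} (hs : s ∈ 𝓝 y) :
    ∃ᶠ n in atTop, f^[n] x ∈ s := by
  obtain ⟨n, hn, hlim⟩ := hy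
  exact hn.tendsto_atTop.frequently_map n (fun _ => id) (hlim.eventually hs).frequently

theorem mem_prolongPts_of_tendsto_of_mem_omegaLimitPts {X : Type*} [PseudoMetricSpace X]
    {f : X → X} {x₀ y : X} {xs ys : ℕ → X} (hxs : Tendsto xs atTop (𝓝 x₀))
    (hys : Tendsto ys atTop (𝓝 y)) (hω : ∀ k, ys k ∈ omegaLimitPts f (xs k)) :
    y ∈ prolongPts f x₀ := by
  obtain ⟨n, hn, hclose⟩ := extraction_forall_of_frequently fun k =>
    frequently_iterate_mem_of_mem_omegaLimitPts (hω k)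
      (Metric.ball_mem_nhds (ys k) (Nat.one_div_pos_of_nat (n := k)))
  refine ⟨xs, n, hn, hxs, hys.congr_dist ?_⟩
  refine squeeze_zero (fun _ => dist_nonneg) (fun k => ?_)
    tendsto_one_div_add_atTop_nhds_zero_nat
  rw [dist_comm]
  exact (hclose k).le

theorem eventually_omegaLimitPts_subset_of_prolongPts_subset {X : Type*}
    [PseudoMetricSpace X] [CompactSpace X] {f : X → X} {x₀ : X} {V : Set X} (hV : IsOpen V)
    (hΩ : prolongPts f x₀ ⊆ V) : ∀ᶠ x in 𝓝 x₀, omegaLimitPts f x ⊆ V := by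
  by_contra hbad
  obtain ⟨xs, hxs, hout⟩ := frequently_iff_seq_forall.mp (not_eventually.mp hbad)
  choose ys hω hyV using fun k => not_subset.mp (hout k)
  obtain ⟨y, hyV', φ, hφ, hlim⟩ := hV.isClosed_compl.isCompact.tendsto_subseq hyV
  exact hyV' <| hΩ <| mem_prolongPts_of_tendsto_of_mem_omegaLimitPts
    (hxs.comp hφ.tendsto_atTop) hlim fun k => hω (φ k)

theorem omegaMap_usc_of_omega_eq_prolong_general {X : Type*} [MetricSpace X] [CompactSpace X]
    (f : X → X)
    (h : ∀ x : X, omegaLimitPts f x = prolongPts f x) :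
    ∀ x₀ : X, ∀ V : Set X, IsOpen V → omegaLimitPts f x₀ ⊆ V →
      ∃ U ∈ 𝓝 x₀, ∀ x ∈ U, omegaLimitPts f x ⊆ V := by
  intro x₀ V hV hsub
  exact ⟨_, eventually_omegaLimitPts_subset_of_prolongPts_subset hV (h x₀ ▸ hsub),
    fun _ hx => hx⟩

/-- If ω(x,f) = Ω(x,f) for every x, then ω_f is upper semicontinuous. -/
theorem omegaMap_usc_of_omega_eq_prolong {X : Type*} [MetricSpace X] [CompactSpace X]
    (f : X → X) (hf : Continuous f)
    (h : ∀ x : X, omegaLimitPts f x = prolongPts f x) :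
    ∀ x₀ : X, ∀ V : Set X, IsOpen V → omegaLimitPts f x₀ ⊆ V →
      ∃ U ∈ 𝓝 x₀, ∀ x ∈ U, omegaLimitPts f x ⊆ V :=
  omegaMap_usc_of_omega_eq_prolong_general f h
end

section
/- Let X be a compact metric space and f : X → X a continuous map such that every point of X is periodic. Then the map ω_f : x ↦ ω(x,f) is lower semicontinuous. -/
open Filter Topology Set

open Function

/- The ω-limit set of a periodic point is its (finite) orbit, so a point `y = f^[m] x₀` of
`V ∩ ω(x₀)` persists: every `x` in the neighbourhood `f^[m] ⁻¹' V` of `x₀` is periodic too,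
hence `f^[m] x ∈ V ∩ ω(x)`. -/

theorem iterate_mem_omegaLimitPts_of_mem_periodicPts {X : Type*} [TopologicalSpace X]
    {f : X → X} {x : X} (hx : x ∈ periodicPts f) (m : ℕ) :
    f^[m] x ∈ omegaLimitPts f x := by
  have hp := minimalPeriod_pos_of_mem_periodicPts hx
  refine ⟨fun i => m + i * minimalPeriod f x, fun i j hij => by simp only; gcongr, ?_⟩
  have hreturn (i : ℕ) : f^[m + i * minimalPeriod f x] x = f^[m] x := by
    rw [iterate_add_apply, ((isPeriodicPt_minimalPeriod f x).const_mul i).eq]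
  simp only [hreturn]
  exact tendsto_const_nhds

theorem finite_range_iterate_of_mem_periodicPts {X : Type*} {f : X → X} {x : X}
    (hx : x ∈ periodicPts f) : (range (f^[·] x)).Finite := by
  refine ((finite_Iio (minimalPeriod f x)).image (f^[·] x)).subset ?_
  rintro _ ⟨k, rfl⟩
  exact ⟨k % minimalPeriod f x, Nat.mod_lt _ (minimalPeriod_pos_of_mem_periodicPts hx),
    iterate_mod_minimalPeriod_eq⟩

theorem omegaLimitPts_subset_range_iterate_of_mem_periodicPts {X : Type*}
    [TopologicalSpace X] [T1Space X] {f : X → X} {x : X} (hx : x ∈ periodicPts f) :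
    omegaLimitPts f x ⊆ range (f^[·] x) := by
  rintro y ⟨n, -, hn⟩
  exact (finite_range_iterate_of_mem_periodicPts hx).isClosed.mem_of_tendsto hn
    (Eventually.of_forall fun i => ⟨n i, rfl⟩)

theorem omegaMap_lsc_of_all_periodic_general {X : Type*} [MetricSpace X]
    (f : X → X) (hf : Continuous f)
    (hper : ∀ x : X, x ∈ Function.periodicPts f) :
    ∀ x₀ : X, ∀ V : Set X, IsOpen V → (V ∩ omegaLimitPts f x₀).Nonempty →
      ∃ U ∈ 𝓝 x₀, ∀ x ∈ U, (V ∩ omegaLimitPts f x).Nonempty := by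
  rintro x₀ V hV ⟨y, hyV, hyω⟩
  obtain ⟨m, rfl⟩ := omegaLimitPts_subset_range_iterate_of_mem_periodicPts (hper x₀) hyω
  exact ⟨f^[m] ⁻¹' V, (hV.preimage (hf.iterate m)).mem_nhds hyV,
    fun x hx => ⟨f^[m] x, hx, iterate_mem_omegaLimitPts_of_mem_periodicPts (hper x) m⟩⟩

/-- If every point is periodic, then ω_f is lower semicontinuous. -/
theorem omegaMap_lsc_of_all_periodic {X : Type*} [MetricSpace X] [CompactSpace X]
    (f : X → X) (hf : Continuous f)
    (hper : ∀ x : X, x ∈ Function.periodicPts f) :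
    ∀ x₀ : X, ∀ V : Set X, IsOpen V → (V ∩ omegaLimitPts f x₀).Nonempty →
      ∃ U ∈ 𝓝 x₀, ∀ x ∈ U, (V ∩ omegaLimitPts f x).Nonempty :=
  omegaMap_lsc_of_all_periodic_general f hf hper
end

section
/- Let X be a dendrite and p an end point of X. If A is a compact subset of X with p ∉ A, then there exists a subcontinuum W of X such that A ⊆ W ⊆ X \ {p}. -/
/-!
Since `p` is an end point, some open `V ∋ p` disjoint from `A` has a one-point boundary `{b}`,
and `W := Vᶜ` works. It is connected: if `Vᶜ = u ∪ v` with `u`, `v` disjoint and closed and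
`b ∈ u`, then `V ∪ u` is clopen, because its closure adds only the boundary point `b`; so it
is all of the space and `v` is empty.
-/

open Filter Topology Set

section

variable {X : Type*} [TopologicalSpace X]

theorem IsOpen.isClopen_union_of_frontier_subset {V u v : Set X} (hV : IsOpen V)
    (hu : IsClosed u) (hv : IsClosed v) (hcover : Vᶜ ⊆ u ∪ v) (huv : Disjoint u v)
    (hfr : frontier V ⊆ u) : IsClopen (V ∪ u) := by
  constructor
  · refine isClosed_of_closure_subset ?_
    rw [closure_union, closure_eq_self_union_frontier, hu.closure_eq]
    exact union_subset (union_subset subset_union_left (hfr.trans subset_union_right))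
      subset_union_right
  · have hcompl : (V ∪ u)ᶜ = Vᶜ ∩ v := by
      ext x
      have hx := @hcover x
      have hxuv := huv.notMem_of_mem_left (a := x)
      simp only [mem_compl_iff, mem_union, mem_inter_iff] at hx hxuv ⊢
      tauto
    rw [← isClosed_compl_iff, hcompl]
    exact hV.isClosed_compl.inter hv

theorem IsOpen.isPreconnected_compl_of_frontier_subsingleton [PreconnectedSpace X] {V : Set X}
    (hV : IsOpen V) (hfr : (frontier V).Subsingleton) : IsPreconnected Vᶜ := by
  rw [isPreconnected_iff_subset_of_fully_disjoint_closed hV.isClosed_compl]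
  intro u v hu hv hcover huv
  wlog hfu : frontier V ⊆ u generalizing u v
  · obtain ⟨b, hb, hbu⟩ := not_subset.mp hfu
    have hbV : b ∈ Vᶜ := (hV.frontier_eq ▸ hb).2
    have hbv : b ∈ v := (hcover hbV).resolve_left hbu
    have hfv : frontier V ⊆ v := fun y hy => hfr hy hb ▸ hbv
    exact (this v u hv hu (union_comm u v ▸ hcover) huv.symm hfv).symm
  rcases isClopen_iff.mp (hV.isClopen_union_of_frontier_subset hu hv hcover huv hfu) with h | h
  · right
    simpa [(union_empty_iff.mp h).2] using hcover
  · left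
    intro x hx
    exact (h ▸ mem_univ x : x ∈ V ∪ u).resolve_left hx

end

theorem subcontinuum_avoiding_endpoint_general {X : Type*} [MetricSpace X] [CompactSpace X]
    [ConnectedSpace X]
    (p : X) (hp : IsEndpoint p) (A : Set X) (hA : IsCompact A) (hpA : p ∉ A) :
    ∃ W : Set X, IsCompact W ∧ IsConnected W ∧ A ⊆ W ∧ W ⊆ {p}ᶜ := by
  obtain ⟨V, hVopen, hpV, hVA, b, hVb⟩ := hp Aᶜ hA.isClosed.isOpen_compl hpA
  have hbV : b ∈ Vᶜ := (hVopen.frontier_eq ▸ hVb ▸ mem_singleton b).2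
  have hconn : IsPreconnected Vᶜ :=
    hVopen.isPreconnected_compl_of_frontier_subsingleton (hVb ▸ subsingleton_singleton)
  exact ⟨Vᶜ, hVopen.isClosed_compl.isCompact, ⟨⟨b, hbV⟩, hconn⟩,
    fun a ha haV => hVA haV ha, compl_subset_compl.mpr (singleton_subset_iff.mpr hpV)⟩

/-- In a dendrite, any compact set missing an end point p is contained in a
subcontinuum avoiding p. -/
theorem subcontinuum_avoiding_endpoint {X : Type*} [MetricSpace X] [CompactSpace X]
    [ConnectedSpace X] [LocallyConnectedSpace X] [Nonempty X]
    (hX : NoSimpleClosedCurve X)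
    (p : X) (hp : IsEndpoint p) (A : Set X) (hA : IsCompact A) (hpA : p ∉ A) :
    ∃ W : Set X, IsCompact W ∧ IsConnected W ∧ A ⊆ W ∧ W ⊆ {p}ᶜ :=
  subcontinuum_avoiding_endpoint_general p hp A hA hpA
end

section
/- Let X be a dendrite and f : X → X a continuous map. If Ω(x,f) is totally disconnected for each x ∈ X, then f is equicontinuous. -/
open Filter Topology Set

/-!
If the iterates of `f` are not equicontinuous, uniform local connectedness of the compact space
yields connected sets `Cᵢ` of diameter `→ 0` and times `nᵢ` with `diam f^[nᵢ](Cᵢ) ≥ ε`. Along an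
ultrafilter the `Cᵢ` shrink to a point `x`, `nᵢ → ∞`, and the connected images `f^[nᵢ](Cᵢ)` stretch
between two distinct points `a, b ∈ Ω(x,f)`. The set `Ω(x,f)` is closed, hence compact, so if it
were totally disconnected it would lie in two disjoint open sets `U ∋ a`, `V ∋ b`. Each connected
image then has to leave `U ∪ V`, and a cluster point of the escaping points lies in `Ω(x,f)` but
outside `U ∪ V`.
-/

section Prolongation

variable {X : Type*} [TopologicalSpace X] [FirstCountableTopology X] {f : X → X} {x y : X}

theorem mem_prolongPts_iff_mapClusterPt :
    y ∈ prolongPts f x ↔ MapClusterPt y (atTop ×ˢ 𝓝 x) (fun p : ℕ × X => f^[p.1] p.2) := by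
  constructor
  · rintro ⟨xs, n, hn, hxs, hy⟩
    exact .of_comp (φ := fun i => (n i, xs i)) (hn.tendsto_atTop.prodMk hxs) hy.mapClusterPt
  · intro hy
    obtain ⟨ψ, hψy, hψ⟩ := hy.exists_seq_tendsto
    obtain ⟨φ, hφ, hnφ⟩ := strictMono_subseq_of_tendsto_atTop (tendsto_fst.comp hψ)
    exact ⟨fun i => (ψ (φ i)).2, fun i => (ψ (φ i)).1, hnφ,
      (tendsto_snd.comp hψ).comp hφ.tendsto_atTop, hψy.comp hφ.tendsto_atTop⟩

theorem isClosed_prolongPts (f : X → X) (x : X) : IsClosed (prolongPts f x) := by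
  have : prolongPts f x = {y | ClusterPt y (map (fun p : ℕ × X => f^[p.1] p.2) (atTop ×ˢ 𝓝 x))} :=
    Set.ext fun _ => mem_prolongPts_iff_mapClusterPt
  exact this ▸ isClosed_setOfPred_clusterPt

theorem mem_prolongPts_of_mapClusterPt {ι : Type*} {l : Filter ι} {n : ι → ℕ} {q : ι → X}
    (hn : Tendsto n l atTop) (hq : Tendsto q l (𝓝 x))
    (hy : MapClusterPt y l (fun j => f^[n j] (q j))) : y ∈ prolongPts f x :=
  mem_prolongPts_iff_mapClusterPt.2 <| .of_comp (hn.prodMk hq) hy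

end Prolongation

theorem IsTotallyDisconnected.exists_isOpen_separation {X : Type*} [TopologicalSpace X]
    [T2Space X] {K : Set X} (hTD : IsTotallyDisconnected K) (hK : IsCompact K) {a b : X}
    (ha : a ∈ K) (hb : b ∈ K) (hab : a ≠ b) :
    ∃ U V : Set X, IsOpen U ∧ IsOpen V ∧ Disjoint U V ∧ K ⊆ U ∪ V ∧ a ∈ U ∧ b ∈ V := by
  have : CompactSpace K := isCompact_iff_compactSpace.1 hK
  have : TotallyDisconnectedSpace K := totallyDisconnectedSpace_subtype_iff.2 hTD
  have : TotallySeparatedSpace K := loc_compact_t2_tot_disc_iff_tot_sep.1 ‹_›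
  obtain ⟨W, hW, haW, hbW⟩ := totallySeparatedSpace_iff_exists_isClopen.1 ‹_›
    (fun h => hab (congrArg Subtype.val h) : (⟨a, ha⟩ : K) ≠ ⟨b, hb⟩)
  obtain ⟨U, V, hU, hV, hWU, hWV, hUV⟩ := SeparatedNhds.of_isCompact_isCompact
    (hW.isClosed.isCompact.image continuous_subtype_val)
    (hW.compl.isClosed.isCompact.image continuous_subtype_val)
    (disjoint_image_of_injective Subtype.val_injective disjoint_compl_right)
  refine ⟨U, V, hU, hV, hUV, fun z hz => ?_, hWU ⟨_, haW, rfl⟩, hWV ⟨_, hbW, rfl⟩⟩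
  by_cases hzW : (⟨z, hz⟩ : K) ∈ W
  exacts [Or.inl (hWU ⟨_, hzW, rfl⟩), Or.inr (hWV ⟨_, hzW, rfl⟩)]

theorem exists_isPreconnected_subset_ball_of_dist_lt {X : Type*} [PseudoMetricSpace X]
    [CompactSpace X] [LocallyConnectedSpace X] {ε : ℝ} (hε : 0 < ε) :
    ∃ δ > 0, ∀ u v : X, dist u v < δ →
      ∃ C : Set X, IsPreconnected C ∧ u ∈ C ∧ v ∈ C ∧ C ⊆ Metric.ball u ε := by
  let U : X → Set X := fun x => connectedComponentIn (Metric.ball x (ε / 2)) x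
  have hxU : ∀ x, x ∈ U x := fun x => mem_connectedComponentIn (Metric.mem_ball_self (by linarith))
  obtain ⟨δ, hδ, hδU⟩ := lebesgue_number_lemma_of_metric isCompact_univ
    (fun x => Metric.isOpen_ball.connectedComponentIn) (fun x _ => mem_iUnion.2 ⟨x, hxU x⟩)
  refine ⟨δ, hδ, fun u v huv => ?_⟩
  obtain ⟨x, hx⟩ := hδU u (mem_univ u)
  have hUx : U x ⊆ Metric.ball x (ε / 2) := connectedComponentIn_subset _ _
  have huU : u ∈ U x := hx (Metric.mem_ball_self hδ)
  refine ⟨U x, isPreconnected_connectedComponentIn, huU,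
    hx (by rwa [Metric.mem_ball, dist_comm]), fun z hz => ?_⟩
  have hz := Metric.mem_ball.1 (hUx hz)
  have hu := Metric.mem_ball'.1 (hUx huU)
  calc dist z u ≤ dist z x + dist x u := dist_triangle _ _ _
    _ < ε := by linarith

theorem exists_isPreconnected_of_not_equicontinuousMap {X : Type*} [MetricSpace X]
    [CompactSpace X] [LocallyConnectedSpace X] {f : X → X} (hf : ¬ EquicontinuousMap f) :
    ∃ ε > 0, ∀ δ > 0, ∃ (C : Set X) (u v : X) (n : ℕ), IsPreconnected C ∧ u ∈ C ∧ v ∈ C ∧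
      C ⊆ Metric.ball u δ ∧ ε ≤ dist (f^[n] u) (f^[n] v) := by
  unfold EquicontinuousMap at hf
  push Not at hf
  obtain ⟨ε, hε, hbad⟩ := hf
  refine ⟨ε, hε, fun δ hδ => ?_⟩
  obtain ⟨δ', hδ', hconn⟩ := exists_isPreconnected_subset_ball_of_dist_lt (X := X) hδ
  obtain ⟨u, v, huv, n, hn⟩ := hbad δ' hδ'
  obtain ⟨C, hC, huC, hvC, hCu⟩ := hconn u v huv
  exact ⟨C, u, v, n, hC, huC, hvC, hCu, hn⟩

theorem tendsto_smallSets_of_subset_ball {X ι : Type*} [PseudoMetricSpace X] {l : Filter ι}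
    {C : ι → Set X} {u : ι → X} {r : ι → ℝ} {x : X} (hu : Tendsto u l (𝓝 x))
    (hr : Tendsto r l (𝓝 0)) (hC : ∀ j, C j ⊆ Metric.ball (u j) (r j)) :
    Tendsto C l (𝓝 x).smallSets := by
  have hR : Tendsto (fun j => r j + dist (u j) x) l (𝓝 0) := by
    simpa using hr.add (tendsto_iff_dist_tendsto_zero.1 hu)
  refine ((tendsto_closedBall_smallSets x).comp hR).smallSets_mono
    (Eventually.of_forall fun j => (hC j).trans ?_)
  exact (Metric.ball_subset_ball' le_rfl).trans Metric.ball_subset_closedBall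

/-- Along an ultrafilter the times `n` either tend to infinity or are eventually some constant `m`,
and in the latter case continuity of `f^[m]` would force `a = b`. -/
theorem tendsto_atTop_of_tendsto_iterate_ne {X ι : Type*} [TopologicalSpace X] [T2Space X]
    {f : X → X} (hf : Continuous f) {𝒰 : Ultrafilter ι} {n : ι → ℕ} {u v : ι → X} {x a b : X}
    (hu : Tendsto u 𝒰 (𝓝 x)) (hv : Tendsto v 𝒰 (𝓝 x))
    (ha : Tendsto (fun j => f^[n j] (u j)) 𝒰 (𝓝 a))
    (hb : Tendsto (fun j => f^[n j] (v j)) 𝒰 (𝓝 b)) (hab : a ≠ b) :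
    Tendsto n 𝒰 atTop := by
  rcases (𝒰.map n).le_cofinite_or_eq_pure with hcof | ⟨m, hm⟩
  · exact Nat.cofinite_eq_atTop ▸ hcof
  have hnm : ∀ᶠ j in 𝒰, n j = m := 
    Ultrafilter.mem_map.1 (hm ▸ Ultrafilter.mem_pure.2 (mem_singleton m))
  have limit : ∀ {w : ι → X} {c : X}, Tendsto w 𝒰 (𝓝 x) →
      Tendsto (fun j => f^[n j] (w j)) 𝒰 (𝓝 c) → c = f^[m] x := fun hw hc =>
    tendsto_nhds_unique hc <| ((hf.iterate m).tendsto x).comp hw |>.congr' <|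
      hnm.mono fun j hj => by simp [hj]
  exact absurd ((limit hu ha).trans (limit hv hb).symm) hab

theorem not_isTotallyDisconnected_prolongPts {X ι : Type*} [TopologicalSpace X]
    [CompactSpace X] [T2Space X] [FirstCountableTopology X] {f : X → X} (hf : Continuous f)
    {l : Filter ι} [l.NeBot] {C : ι → Set X} {u v : ι → X} {n : ι → ℕ} {x a b : X}
    (hC : ∀ j, IsPreconnected (C j)) (hu : ∀ j, u j ∈ C j) (hv : ∀ j, v j ∈ C j)
    (hCx : Tendsto C l (𝓝 x).smallSets) (hn : Tendsto n l atTop)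
    (ha : Tendsto (fun j => f^[n j] (u j)) l (𝓝 a))
    (hb : Tendsto (fun j => f^[n j] (v j)) l (𝓝 b)) (hab : a ≠ b) :
    ¬ IsTotallyDisconnected (prolongPts f x) := by
  intro hTD
  have hmem : ∀ {w : ι → X}, (∀ᶠ j in l, w j ∈ C j) → ∀ {c : X},
      MapClusterPt c l (fun j => f^[n j] (w j)) → c ∈ prolongPts f x := fun hw _ hc =>
    mem_prolongPts_of_mapClusterPt hn (hCx.of_smallSets hw) hc
  obtain ⟨U, V, hU, hV, hUV, hΩ, haU, hbV⟩ := hTD.exists_isOpen_separation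
    (isClosed_prolongPts f x).isCompact (hmem (.of_forall hu) ha.mapClusterPt)
    (hmem (.of_forall hv) hb.mapClusterPt) hab
  -- The connected images `f^[n j] '' C j` run from near `a ∈ U` to near `b ∈ V`.
  have hescape : ∀ᶠ j in l, ∃ z ∈ C j, f^[n j] z ∉ U ∪ V := by
    filter_upwards [ha (hU.mem_nhds haU), hb (hV.mem_nhds hbV)] with j hjU hjV
    by_contra! hsub
    have hL := ((hC j).image _ (hf.iterate (n j)).continuousOn).subset_left_of_subset_union
      hU hV hUV (image_subset_iff.2 hsub) ⟨_, mem_image_of_mem _ (hu j), hjU⟩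
    exact disjoint_left.1 hUV (hL (mem_image_of_mem _ (hv j))) hjV
  have : Nonempty X := ⟨x⟩
  choose! z hzC hzUV using fun j (h : ∃ z ∈ C j, f^[n j] z ∉ U ∪ V) => h
  obtain ⟨w, -, hw⟩ := isCompact_univ.exists_mapClusterPt (f := l)
    (u := fun j => f^[n j] (z j)) (by simp)
  have hwUV : w ∉ U ∪ V := (hU.union hV).isClosed_compl.mem_of_mapClusterPt hw
    (hescape.mono fun j hj => hzUV j hj)
  exact hwUV (hΩ (hmem (hescape.mono fun j hj => hzC j hj) hw))

theorem equicontinuous_of_prolong_totallyDisconnected_general {X : Type*} [MetricSpace X]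
    [CompactSpace X] [LocallyConnectedSpace X]
    (f : X → X) (hf : Continuous f)
    (h : ∀ x : X, IsTotallyDisconnected (prolongPts f x)) :
    EquicontinuousMap f := by
  by_contra hne
  obtain ⟨ε, hε, hbad⟩ := exists_isPreconnected_of_not_equicontinuousMap hne
  choose C u v n hC hu hv hCu hn using
    fun i : ℕ => hbad (1 / ((i : ℝ) + 1)) Nat.one_div_pos_of_nat
  let 𝒰 : Ultrafilter ℕ := hyperfilter ℕ
  have h𝒰 : (𝒰 : Filter ℕ) ≤ atTop := Nat.cofinite_eq_atTop ▸ hyperfilter_le_cofinite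
  have hlim : ∀ w : ℕ → X, Tendsto w 𝒰 (𝓝 (𝒰.map w).lim) := fun w => (𝒰.map w).le_nhds_lim
  set x := (𝒰.map u).lim
  have hCx : Tendsto C 𝒰 (𝓝 x).smallSets := tendsto_smallSets_of_subset_ball (hlim u)
    (tendsto_one_div_add_atTop_nhds_zero_nat.mono_left h𝒰) hCu
  have ha := hlim fun i => f^[n i] (u i)
  have hb := hlim fun i => f^[n i] (v i)
  have hab : (𝒰.map fun i => f^[n i] (u i)).lim ≠ (𝒰.map fun i => f^[n i] (v i)).lim :=
    fun heq => hε.not_ge <| by simpa [heq] using ge_of_tendsto (ha.dist hb) (.of_forall hn)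
  have hn_top := tendsto_atTop_of_tendsto_iterate_ne hf (hCx.of_smallSets (.of_forall hu))
    (hCx.of_smallSets (.of_forall hv)) ha hb hab
  exact not_isTotallyDisconnected_prolongPts hf hC hu hv hCx hn_top ha hb hab (h x)

/-- If Ω(x,f) is totally disconnected for each x in a dendrite, then f is
equicontinuous. -/
theorem equicontinuous_of_prolong_totallyDisconnected {X : Type*} [MetricSpace X]
    [CompactSpace X] [ConnectedSpace X] [LocallyConnectedSpace X] [Nonempty X]
    (hX : NoSimpleClosedCurve X) (f : X → X) (hf : Continuous f)
    (h : ∀ x : X, IsTotallyDisconnected (prolongPts f x)) :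
    EquicontinuousMap f :=
  equicontinuous_of_prolong_totallyDisconnected_general f hf h
end
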